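/- For every integer l coprime to N and every integer k: Δ(σ^l) = Δ(σ), and P_{σ^l, σ^{lk}}(τ) = P_{σ, σ^k}(τ) for all τ with Im τ > 0. -/

import Mathlib

open TensorProduct

/-- Complexification of a lattice automorphism: the base change to `ℂ ⊗[ℤ] Q`. -/
noncomputable def bch {Q : Type*} [AddCommGroup Q] (σ : Q ≃ₗ[ℤ] Q) :
    Module.End ℂ (ℂ ⊗[ℤ] Q) :=
  LinearMap.baseChange ℂ σ.toLinearMap

/-- `dim_ℂ h^ρ_{j/N}`, the dimension of the eigenspace of `ρ` with eigenvalue `e^{-2πij/N}`. -/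
noncomputable def eigDimN {Q : Type*} [AddCommGroup Q] (ρ : Q ≃ₗ[ℤ] Q) (N j : ℕ) : ℕ :=
  Module.finrank ℂ
    ↥(LinearMap.ker (bch ρ - Complex.exp (-(2 * Real.pi * Complex.I * (j : ℂ)) / (N : ℂ)) • 1))

/-- `Δ(ρ) = (1/4) ∑_{j=1}^{N-1} (j/N)(1 - j/N) dim h^ρ_{j/N}`. -/
noncomputable def deltaN {Q : Type*} [AddCommGroup Q] (ρ : Q ≃ₗ[ℤ] Q) (N : ℕ) : ℚ :=
  (1 / 4 : ℚ) * ∑ j ∈ Finset.Ico 1 N, ((j : ℚ) / N) * (1 - (j : ℚ) / N) * (eigDimN ρ N j : ℚ)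

/-- `P_{ρ,ρ^k}(τ) = e^{2πiτ(r/24 - Δ(ρ))} ∏_{m≥1} ∏_{j<N}
    (1 - e^{-2πijk/N} e^{2πiτ(m - j/N)})^{dim h^ρ_{j/N}}`. -/
noncomputable def Psik {Q : Type*} [AddCommGroup Q] (ρ : Q ≃ₗ[ℤ] Q) (N : ℕ) (k : ℤ)
    (τ : ℂ) : ℂ :=
  Complex.exp (2 * Real.pi * Complex.I * τ *
      ((Module.finrank ℂ (ℂ ⊗[ℤ] Q) : ℂ) / 24 - ((deltaN ρ N : ℚ) : ℂ))) *
    ∏' m : ℕ, ∏ j ∈ Finset.range N,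
      (1 - Complex.exp (-(2 * Real.pi * Complex.I * (j : ℂ) * (k : ℂ)) / (N : ℂ)) *
          Complex.exp (2 * Real.pi * Complex.I * τ * (((m : ℂ) + 1) - (j : ℂ) / (N : ℂ)))) ^
        eigDimN ρ N j

/-!
For `σ ^ N = 1` the averaging projector `N⁻¹ ∑ₐ μ⁻ᵃ σᵃ` onto the `μ`-eigenspace shows
`N · dim h^σ_{j/N} = ∑ₐ ω^{ja} tr σᵃ` with `ω = e^{2πi/N}` and integer traces `tr σᵃ`.
For `σ ^ l` this sum is `∑ₐ ω^{ja} tr σ^{la}`; being `N` times a dimension it is rational, hence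
fixed by the Galois conjugation `ω ↦ ω ^ l`, and since `a ↦ la` permutes `ℤ/N` the conjugated sum
is the one for `σ`. So `σ ^ l` and `σ` have the same eigenspace dimensions, hence the same `Δ`
and `P`.
-/

open Finset LinearMap Polynomial

theorem IsPrimitiveRoot.aeval_pow_of_coprime {K : Type*} [Field K] [CharZero K] {ζ : K} {N : ℕ}
    (hζ : IsPrimitiveRoot ζ N) (hN : 0 < N) {p : ℚ[X]} {q : ℚ} (h : aeval ζ p = q) {m : ℕ}
    (hm : m.Coprime N) : aeval (ζ ^ m) p = q := by
  obtain ⟨r, hr⟩ : cyclotomic N ℚ ∣ p - C q := by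
    rw [cyclotomic_eq_minpoly_rat hζ hN]
    exact minpoly.dvd ℚ ζ (by simp [h])
  have hroot : aeval (ζ ^ m) (cyclotomic N ℚ) = 0 := by
    rw [cyclotomic_eq_minpoly_rat (hζ.pow_of_coprime m hm) hN]
    exact minpoly.aeval ℚ _
  simpa [hroot, sub_eq_zero] using congrArg (aeval (ζ ^ m)) hr

theorem Function.Periodic.sum_range_mul_of_coprime {M : Type*} [AddCommMonoid M] {f : ℕ → M}
    {N l : ℕ} (hf : Function.Periodic f N) (hl : l.Coprime N) :
    ∑ a ∈ range N, f (l * a) = ∑ a ∈ range N, f a := by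
  have hinj : Set.InjOn (fun a => l * a % N) (range N) := by
    intro a ha b hb hab
    have := Nat.ModEq.cancel_left_of_coprime (Nat.coprime_comm.mp hl) hab
    exact Nat.ModEq.eq_of_lt_of_lt this (by simpa using ha) (by simpa using hb)
  have hmaps : Set.MapsTo (fun a => l * a % N) (range N) (range N) := by
    intro a ha
    simpa using Nat.mod_lt _ (by simp at ha; omega)
  exact sum_nbij (fun a => l * a % N) hmaps hinj
    (surjOn_of_injOn_of_card_le _ hmaps hinj le_rfl) (fun a _ => (hf.map_mod_nat _).symm)

section EigenAverage

variable {K V : Type*} [Field K] [AddCommGroup V] [Module K V]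

noncomputable def eigenAverage (N : ℕ) (T : Module.End K V) (μ : K) : Module.End K V :=
  (N : K)⁻¹ • ∑ a ∈ range N, μ⁻¹ ^ a • T ^ a

variable {N : ℕ} {T : Module.End K V} {μ : K}

lemma mul_eigenAverage (hN : N ≠ 0) (hT : T ^ N = 1) (hμ : μ ^ N = 1) :
    T * eigenAverage N T μ = μ • eigenAverage N T μ := by
  have hμ0 : μ ≠ 0 := by rintro rfl; simp [hN] at hμ
  have hshift : ∑ a ∈ range N, μ⁻¹ ^ (a + 1) • T ^ (a + 1) = ∑ a ∈ range N, μ⁻¹ ^ a • T ^ a := by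
    have := (sum_range_succ' (fun a => μ⁻¹ ^ a • T ^ a) N).symm.trans
      (sum_range_succ (fun a => μ⁻¹ ^ a • T ^ a) N)
    simpa [inv_pow, hμ, hT] using this
  have hTS : T * ∑ a ∈ range N, μ⁻¹ ^ a • T ^ a = μ • ∑ a ∈ range N, μ⁻¹ ^ a • T ^ a := by
    rw [Finset.mul_sum, ← hshift, Finset.smul_sum]
    refine sum_congr rfl fun a _ => ?_
    rw [mul_smul_comm, ← pow_succ', smul_smul, pow_succ' μ⁻¹, ← mul_assoc, mul_inv_cancel₀ hμ0,
      one_mul]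
  rw [eigenAverage, mul_smul_comm, hTS, smul_comm]

lemma eigenAverage_apply_of_mem_ker (hN : (N : K) ≠ 0) (hμ : μ ≠ 0) {x : V}
    (hx : x ∈ ker (T - μ • 1)) : eigenAverage N T μ x = x := by
  have hTx : ∀ a : ℕ, (T ^ a) x = μ ^ a • x := by
    have : T x = μ • x := by simpa [sub_eq_zero] using hx
    intro a
    induction a with
    | zero => simp
    | succ a ih => rw [pow_succ', Module.End.mul_apply, ih, map_smul, this, smul_smul, pow_succ]
  simp only [eigenAverage, inv_pow, LinearMap.smul_apply, LinearMap.coe_sum, Finset.sum_apply,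
    hTx, smul_smul, inv_mul_cancel₀ (pow_ne_zero _ hμ), one_smul, sum_const, card_range]
  rw [← Nat.cast_smul_eq_nsmul K, smul_smul, inv_mul_cancel₀ hN, one_smul]

lemma isProj_eigenAverage (hN : (N : K) ≠ 0) (hT : T ^ N = 1) (hμ : μ ^ N = 1) :
    IsProj (ker (T - μ • 1)) (eigenAverage N T μ) := by
  have hN0 : N ≠ 0 := by rintro rfl; simp at hN
  have hμ0 : μ ≠ 0 := by rintro rfl; simp [hN0] at hμ
  refine ⟨fun x => ?_, fun x hx => eigenAverage_apply_of_mem_ker hN hμ0 hx⟩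
  have := congr($(mul_eigenAverage hN0 hT hμ) x)
  simpa [sub_eq_zero] using this

lemma finrank_ker_sub_smul_eq_trace_sum [FiniteDimensional K V] (hN : (N : K) ≠ 0)
    (hT : T ^ N = 1) (hμ : μ ^ N = 1) :
    (Module.finrank K (ker (T - μ • 1)) : K) =
      (N : K)⁻¹ * ∑ a ∈ range N, μ⁻¹ ^ a * trace K V (T ^ a) := by
  rw [← (isProj_eigenAverage hN hT hμ).trace, eigenAverage]
  simp only [map_smul, map_sum, smul_eq_mul]

end EigenAverage

section Lattice

variable {Q : Type*} [AddCommGroup Q]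

lemma bch_pow (ρ : Q ≃ₗ[ℤ] Q) (a : ℕ) : bch (ρ ^ a) = bch ρ ^ a := by
  rw [bch, bch, ← baseChange_pow]
  exact congrArg _ (map_pow LinearEquiv.automorphismGroup.toLinearMapMonoidHom ρ a)

variable [Module.Free ℤ Q] [Module.Finite ℤ Q]

lemma trace_bch_pow (ρ : Q ≃ₗ[ℤ] Q) (a : ℕ) :
    trace ℂ _ (bch ρ ^ a) = (trace ℤ Q (ρ ^ a).toLinearMap : ℂ) := by
  rw [← bch_pow, bch, trace_baseChange, algebraMap_int_eq, eq_intCast]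

lemma natCast_mul_eigDimN {N : ℕ} (hN : 0 < N) {ρ : Q ≃ₗ[ℤ] Q} (hρ : ρ ^ N = 1) (j : ℕ) :
    (N : ℂ) * eigDimN ρ N j = ∑ a ∈ range N,
      Complex.exp (2 * Real.pi * Complex.I / N) ^ (j * a) * trace ℤ Q (ρ ^ a).toLinearMap := by
  set ω := Complex.exp (2 * Real.pi * Complex.I / N)
  have hNC : (N : ℂ) ≠ 0 := by exact_mod_cast hN.ne'
  have hμ : Complex.exp (-(2 * Real.pi * Complex.I * j) / N) = (ω ^ j)⁻¹ := by
    rw [← Complex.exp_nat_mul, ← Complex.exp_neg]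
    ring_nf
  have hbch : bch ρ ^ N = 1 := by rw [← bch_pow, hρ]; exact baseChange_one ℤ Q
  have hωN : (ω ^ j)⁻¹ ^ N = 1 := by
    rw [inv_pow, ← pow_mul, mul_comm, pow_mul, (Complex.isPrimitiveRoot_exp N hN.ne').pow_eq_one,
      one_pow, inv_one]
  rw [eigDimN, hμ, finrank_ker_sub_smul_eq_trace_sum hNC hbch hωN, ← mul_assoc,
    mul_inv_cancel₀ hNC, one_mul]
  simp only [inv_inv, ← pow_mul, trace_bch_pow]

lemma eigDimN_pow_of_coprime {N : ℕ} (hN : 0 < N) {σ : Q ≃ₗ[ℤ] Q} (hσ : σ ^ N = 1) {l : ℕ}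
    (hl : l.Coprime N) (j : ℕ) : eigDimN (σ ^ l) N j = eigDimN σ N j := by
  set ω := Complex.exp (2 * Real.pi * Complex.I / N)
  have hω : IsPrimitiveRoot ω N := Complex.isPrimitiveRoot_exp N hN.ne'
  set t : ℕ → ℤ := fun a => trace ℤ Q (σ ^ a).toLinearMap
  have hσl : (σ ^ l) ^ N = 1 := by rw [← pow_mul, mul_comm, pow_mul, hσ, one_pow]
  set p : ℚ[X] := ∑ a ∈ range N, C (t (l * a) : ℚ) * X ^ (j * a)
  have haeval : ∀ z : ℂ, aeval z p = ∑ a ∈ range N, z ^ (j * a) * t (l * a) := by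
    intro z
    simp [p, mul_comm]
  have hp : aeval ω p = ((N * eigDimN (σ ^ l) N j : ℕ) : ℚ) := by
    push_cast
    rw [haeval, natCast_mul_eigDimN hN hσl]
    simp only [← pow_mul]
    rfl
  have hperiodic : Function.Periodic (fun b => ω ^ (j * b) * (t b : ℂ)) N := by
    intro b
    have hωN : ω ^ (j * N) = 1 := by rw [mul_comm, pow_mul, hω.pow_eq_one, one_pow]
    simp [t, mul_add, pow_add, hωN, hσ]
  have key : (((N * eigDimN (σ ^ l) N j : ℕ) : ℚ) : ℂ) = N * eigDimN σ N j := by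
    rw [← hω.aeval_pow_of_coprime hN hp hl, haeval,
      natCast_mul_eigDimN hN hσ]
    simpa [← pow_mul, mul_left_comm j l] using hperiodic.sum_range_mul_of_coprime hl
  push_cast at key
  exact_mod_cast mul_left_cancel₀ (by exact_mod_cast hN.ne') key

end Lattice

theorem stmt_18 (Q : Type*) [AddCommGroup Q] [Module.Free ℤ Q] [Module.Finite ℤ Q]
    (N : ℕ) (hN : 0 < N)
    (σ : Q ≃ₗ[ℤ] Q) (hσN : σ ^ N = 1)
    (l : ℕ) (hl : Nat.Coprime l N) :
    deltaN (σ ^ l) N = deltaN σ N ∧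
    ∀ (k : ℤ) (τ : ℂ), 0 < τ.im → Psik (σ ^ l) N k τ = Psik σ N k τ := by
  have hdim := eigDimN_pow_of_coprime hN hσN hl
  have hΔ : deltaN (σ ^ l) N = deltaN σ N := by simp only [deltaN, hdim]
  exact ⟨hΔ, fun k τ _ => by simp only [Psik, hΔ, hdim]⟩
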